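/- If G is a graph of diameter 2, then γ_t(G) ≤ δ(G) + 1, where δ(G) is the minimum degree. -/

import Mathlib

/-- A total dominating set: every vertex has a neighbor in `S`. -/
def SimpleGraph.TotalDominatingSet {V : Type*} (G : SimpleGraph V) (S : Set V) : Prop :=
  ∀ v : V, ∃ u ∈ S, G.Adj v u

/-- The total domination number: minimum cardinality of a total dominating set. -/
noncomputable def SimpleGraph.totalDominationNumber {V : Type*} (G : SimpleGraph V) : ℕ :=
  sInf {k | ∃ S : Set V, G.TotalDominatingSet S ∧ S.ncard = k}

/-!
If `x` has minimum degree and every vertex lies within distance two of `x`, then the closed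
neighbourhood `N[x] = N(x) ∪ {x}` (Mathlib's `G.ball x 2`) is a total dominating set: `x`
dominates its neighbours, a neighbour of `x` dominates `x` itself, and every vertex at
distance two from `x` has a common neighbour with `x`. Its size is `δ(G) + 1`.
-/

namespace SimpleGraph

variable {V : Type*} {G : SimpleGraph V}

theorem totalDominationNumber_le_ncard {S : Set V} (hS : G.TotalDominatingSet S) :
    G.totalDominationNumber ≤ S.ncard :=
  Nat.sInf_le ⟨S, hS, rfl⟩

theorem exists_adj_mem_ball_two_of_edist_le_two {c v : V} (hc : ∃ w, G.Adj c w)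
    (hv : G.edist v c ≤ 2) : ∃ u ∈ G.ball c 2, G.Adj v u := by
  rw [ball_two]
  obtain rfl | hne := eq_or_ne v c
  · obtain ⟨w, hw⟩ := hc
    exact ⟨w, Set.mem_insert_of_mem _ hw, hw⟩
  by_cases hadj : G.Adj v c
  · exact ⟨c, Set.mem_insert _ _, hadj⟩
  have hv2 : G.edist v c = 2 := by
    refine le_antisymm hv (not_lt.mp fun hlt => hadj ?_)
    have : G.edist v c ≤ 1 := Order.le_of_lt_succ (by simpa [one_add_one_eq_two] using hlt)
    exact (edist_le_one_iff_adj_or_eq.mp this).resolve_right hne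
  obtain ⟨u, hu⟩ := (edist_eq_two_iff.mp hv2).2.2
  rw [mem_commonNeighbors] at hu
  exact ⟨u, Set.mem_insert_of_mem _ hu.2, hu.1⟩

theorem totalDominatingSet_ball_two {c : V} (hc : ∃ w, G.Adj c w) (hecc : G.eccent c ≤ 2) :
    G.TotalDominatingSet (G.ball c 2) := fun _ =>
  exists_adj_mem_ball_two_of_edist_le_two hc (edist_comm.trans_le (edist_le_eccent.trans hecc))

theorem ncard_ball_two (c : V) [Fintype (G.neighborSet c)] :
    (G.ball c 2).ncard = G.degree c + 1 := by
  rw [ball_two, Set.ncard_insert_of_notMem (G.notMem_neighborSet_self (a := c)),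
    Set.ncard_eq_toFinset_card', Set.toFinset_card, card_neighborSet_eq_degree]

theorem totalDominationNumber_le_degree_add_one {c : V} [Fintype (G.neighborSet c)]
    (hc : ∃ w, G.Adj c w) (hecc : G.eccent c ≤ 2) :
    G.totalDominationNumber ≤ G.degree c + 1 :=
  ncard_ball_two (G := G) c ▸ totalDominationNumber_le_ncard (totalDominatingSet_ball_two hc hecc)

end SimpleGraph

theorem total_domination_le_minDegree_add_one_of_diam_two
    {V : Type*} [Fintype V] (G : SimpleGraph V) [DecidableRel G.Adj]
    (hdiam : G.diam = 2) :
    G.totalDominationNumber ≤ G.minDegree + 1 := by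
  have hfin : G.ediam ≠ ⊤ := G.ediam_ne_top_of_diam_ne_zero (by omega)
  have : Nontrivial V := G.nontrivial_of_diam_ne_zero (by omega)
  have hediam : G.ediam = 2 := by rw [← ENat.natCast_toNat hfin]; exact congrArg _ hdiam
  obtain ⟨x, hx⟩ := G.exists_minimal_degree_vertex
  rw [hx]
  exact G.totalDominationNumber_le_degree_add_one
    ((G.preconnected_of_ediam_ne_top hfin).exists_adj_of_nontrivial x)
    (hediam ▸ G.eccent_le_ediam)
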